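/- (Final Lemma, Jacobian obstruction) Let U ⊆ ℂ be open, let μ, a : U → ℂ, and let x, y : U → ℝ be real-differentiable functions satisfying x_w = 2μa and y_w = μ(1 + a²) on U (Wirtinger derivatives in w = u + iv). Then at every w ∈ U the Jacobian of the coordinate transformation satisfies x_u y_v − x_v y_u = 8|μ(w)|²(1 − |a(w)|²)·Im(a(w)). In particular, if μ(w) ≠ 0 and |a(w)| ≠ 1, then the Jacobian is nonzero at w if and only if Im(a(w)) ≠ 0; hence Im(a) ≠ 0 on U is a necessary condition for w ↦ (x(w), y(w)) to be a valid coordinate transformation realizing the isothermal representation f_w = μ(2a, 1+a², i(1−a²), 0) of a graph surface (x, y, A(x,y), 0) in ℝ³₁. -/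

import Mathlib

/-!
Since `g_u = 2 Re g_w` and `g_v = -2 Im g_w` for real `g`, the Jacobian of `(x, y)` equals
`4 Im (x_w · conj y_w)`. The Wirtinger equations turn this into
`8 |μ|² Im (a · conj (1 + a²)) = 8 |μ|² (1 - |a|²) Im a`.
-/

open Complex

/-- The Wirtinger derivative `g_w = (1/2)(g_u − i g_v)` of a real-valued map
`g : ℂ → ℝ`, viewed as a complex number. -/
noncomputable def wdR (g : ℂ → ℝ) (w : ℂ) : ℂ :=
  (1 / 2 : ℂ) * ((fderiv ℝ g w 1 : ℝ) - Complex.I * (fderiv ℝ g w Complex.I : ℝ))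

open ComplexConjugate

lemma fderiv_one_eq_two_mul_wdR_re (g : ℂ → ℝ) (w : ℂ) :
    fderiv ℝ g w 1 = 2 * (wdR g w).re := by
  simp [wdR]

lemma fderiv_I_eq_neg_two_mul_wdR_im (g : ℂ → ℝ) (w : ℂ) :
    fderiv ℝ g w I = -2 * (wdR g w).im := by
  simp [wdR]

lemma jacobian_eq_four_mul_im_wdR_mul_conj (g h : ℂ → ℝ) (w : ℂ) :
    fderiv ℝ g w 1 * fderiv ℝ h w I - fderiv ℝ g w I * fderiv ℝ h w 1 =
      4 * (wdR g w * conj (wdR h w)).im := by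
  rw [fderiv_one_eq_two_mul_wdR_re, fderiv_one_eq_two_mul_wdR_re,
    fderiv_I_eq_neg_two_mul_wdR_im, fderiv_I_eq_neg_two_mul_wdR_im, mul_im, conj_re, conj_im]
  ring

lemma im_two_mul_mul_conj_mul_one_add_sq (μ a : ℂ) :
    (2 * μ * a * conj (μ * (1 + a ^ 2))).im = 2 * ‖μ‖ ^ 2 * (1 - ‖a‖ ^ 2) * a.im := by
  rw [Complex.sq_norm, Complex.sq_norm, normSq_apply, normSq_apply]
  simp only [mul_im, mul_re, map_mul, map_add, map_one, conj_re, conj_im, add_re,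
    add_im, one_re, one_im, re_ofNat, im_ofNat, pow_two]
  ring

lemma one_sub_sq_norm_ne_zero {E : Type*} [SeminormedAddGroup E] {a : E} (ha : ‖a‖ ≠ 1) :
    1 - ‖a‖ ^ 2 ≠ 0 := by
  rw [sub_ne_zero, ne_comm, ne_eq, pow_eq_one_iff_of_nonneg (norm_nonneg a) two_ne_zero]
  exact ha

theorem stmt_19_general (U : Set ℂ) (μ a : ℂ → ℂ) (x y : ℂ → ℝ)
    (hxw : ∀ w ∈ U, wdR x w = 2 * μ w * a w)
    (hyw : ∀ w ∈ U, wdR y w = μ w * (1 + (a w) ^ 2)) :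
    ∀ w ∈ U,
      fderiv ℝ x w 1 * fderiv ℝ y w Complex.I -
          fderiv ℝ x w Complex.I * fderiv ℝ y w 1 =
        8 * ‖μ w‖ ^ 2 * (1 - ‖a w‖ ^ 2) * (a w).im ∧
      (μ w ≠ 0 → ‖a w‖ ≠ 1 →
        (fderiv ℝ x w 1 * fderiv ℝ y w Complex.I -
            fderiv ℝ x w Complex.I * fderiv ℝ y w 1 ≠ 0 ↔ (a w).im ≠ 0)) := by
  intro w hw
  have jacobian : fderiv ℝ x w 1 * fderiv ℝ y w I - fderiv ℝ x w I * fderiv ℝ y w 1 =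
      8 * ‖μ w‖ ^ 2 * (1 - ‖a w‖ ^ 2) * (a w).im := by
    rw [jacobian_eq_four_mul_im_wdR_mul_conj, hxw w hw, hyw w hw,
      im_two_mul_mul_conj_mul_one_add_sq]
    ring
  refine ⟨jacobian, fun hμ ha => ?_⟩
  simp [jacobian, hμ, one_sub_sq_norm_ne_zero ha]

/-- Final Lemma, Jacobian obstruction: if real-differentiable
`x, y : U → ℝ` satisfy the Wirtinger equations `x_w = 2μa` and `y_w = μ(1+a²)` on `U`,
then the Jacobian satisfies `x_u y_v − x_v y_u = 8|μ|²(1−|a|²)·Im(a)` at every `w ∈ U`;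
in particular, where `μ ≠ 0` and `|a| ≠ 1`, the Jacobian is nonzero iff `Im(a) ≠ 0`. -/
theorem stmt_19 (U : Set ℂ) (hU : IsOpen U) (μ a : ℂ → ℂ) (x y : ℂ → ℝ)
    (hx : ∀ w ∈ U, DifferentiableAt ℝ x w) (hy : ∀ w ∈ U, DifferentiableAt ℝ y w)
    (hxw : ∀ w ∈ U, wdR x w = 2 * μ w * a w)
    (hyw : ∀ w ∈ U, wdR y w = μ w * (1 + (a w) ^ 2)) :
    ∀ w ∈ U,
      fderiv ℝ x w 1 * fderiv ℝ y w Complex.I -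
          fderiv ℝ x w Complex.I * fderiv ℝ y w 1 =
        8 * ‖μ w‖ ^ 2 * (1 - ‖a w‖ ^ 2) * (a w).im ∧
      (μ w ≠ 0 → ‖a w‖ ≠ 1 →
        (fderiv ℝ x w 1 * fderiv ℝ y w Complex.I -
            fderiv ℝ x w Complex.I * fderiv ℝ y w 1 ≠ 0 ↔ (a w).im ≠ 0)) :=
  stmt_19_general U μ a x y hxw hyw
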